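/- Let a_i = 2^{−i} · ∏_{j=i+1}^{∞} (1 − 2^{−j}) for each natural number i ≥ 0. Then ∑_{i=0}^{∞} i² · a_i = c₀² + c₀ + c₁, where c₀ = ∑_{i=1}^{∞} 1/(2^i − 1) and c₁ = ∑_{i=1}^{∞} 1/(2^i − 1)². -/

import Mathlib

/-!
For `0 ≤ q < 1` put `w_k = q ^ k ∏_{j > k} (1 - q ^ j)`, so that `a = w` at `q = 1/2`, and
`(1 - q ^ (k + 1)) w_(k+1) = q w_k`. Shifting the index with this recurrence, the tilted moments
`M_m(x) = ∑ k ^ m x ^ k w_k` satisfy `M_0(q x) = (1 - q x) M_0(x)`,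
`M_1(q x) = (1 - q x) M_1(x) - q x M_0(x)` and
`M_2(q x) = (1 - q x) M_2(x) - q x (2 M_1(x) + M_0(x))`.
Along `x = q ^ t` the normalised moments `μ_t = M_1 / M_0` and `ν_t = M_2 / M_0` therefore drop
by `d_t = q ^ (t + 1) / (1 - q ^ (t + 1))` and by `d_t (2 μ_t + 1)` from `t` to `t + 1`, and both
tend to `0` since the tilted weights concentrate at `k = 0`. Telescoping gives `μ_0 = ∑ d_t`, and
since `d_t (2 μ_t + 1) = (μ_t ^ 2 - μ_(t+1) ^ 2) + d_t ^ 2 + d_t` also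
`ν_0 = μ_0 ^ 2 + ∑ d_t ^ 2 + ∑ d_t`. Finally `ν_0 = M_2(1)` because `M_0(1) = 1`:
`M_0(q ^ t) ∏_{j > t} (1 - q ^ j)` does not depend on `t` and tends to
`w_0 = ∏_{j > 0} (1 - q ^ j)`.
At `q = 1/2`, `d_t = 1 / (2 ^ (t + 1) - 1)`.
-/

/-- `a i = 2^{−i} · ∏_{j=i+1}^{∞} (1 − 2^{−j})`, the infinite product taken over all
integers `j ≥ i + 1` (indexed by `j ↦ j + i + 1` over `ℕ`). -/
noncomputable def a (i : ℕ) : ℝ :=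
  (2 : ℝ) ^ (-(i : ℤ)) * ∏' j : ℕ, (1 - (2 : ℝ) ^ (-((j : ℤ) + (i : ℤ) + 1)))

/-- The Erdős–Borwein constant `c₀ = ∑_{i=1}^{∞} 1/(2^i − 1)`. -/
noncomputable def c₀ : ℝ := ∑' i : ℕ, 1 / ((2 : ℝ) ^ (i + 1) - 1)

/-- The digital search tree constant `c₁ = ∑_{i=1}^{∞} 1/(2^i − 1)²`. -/
noncomputable def c₁ : ℝ := ∑' i : ℕ, 1 / ((2 : ℝ) ^ (i + 1) - 1) ^ 2

open Filter Topology Real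

theorem Antitone.hasSum_sub_succ {f : ℕ → ℝ} {l : ℝ} (hf : Antitone f)
    (hl : Tendsto f atTop (𝓝 l)) : HasSum (fun n => f n - f (n + 1)) (f 0 - l) := by
  refine (hasSum_iff_tendsto_nat_of_nonneg (fun n => sub_nonneg.2 (hf n.le_succ)) _).2 ?_
  simp_rw [Finset.sum_range_sub']
  exact tendsto_const_nhds.sub hl

lemma div_sub_div_eq_of_recurrence {y A A' B B' N : ℝ} (hA : A ≠ 0) (hy : 1 - y ≠ 0)
    (hA' : A' = (1 - y) * A) (hB' : B' = (1 - y) * B - y * N) :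
    B / A - B' / A' = y / (1 - y) * (N / A) := by
  subst hA' hB'
  field_simp
  ring

noncomputable def tailProd (q : ℝ) (i : ℕ) : ℝ := ∏' j : ℕ, (1 - q ^ (j + i + 1))

noncomputable def qWeight (q : ℝ) (i : ℕ) : ℝ := q ^ i * tailProd q i

noncomputable def tiltedMoment (q : ℝ) (m : ℕ) (x : ℝ) : ℝ :=
  ∑' k : ℕ, (k : ℝ) ^ m * x ^ k * qWeight q k

noncomputable def lambertTerm (q : ℝ) (t : ℕ) : ℝ := q ^ (t + 1) / (1 - q ^ (t + 1))

variable {q : ℝ}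

lemma one_sub_pow_succ_pos (hq₀ : 0 ≤ q) (hq₁ : q < 1) (n : ℕ) : 0 < 1 - q ^ (n + 1) :=
  sub_pos.2 (pow_lt_one₀ hq₀ hq₁ n.succ_ne_zero)

lemma summable_log_one_sub_pow (hq₀ : 0 ≤ q) (hq₁ : q < 1) :
    Summable fun j : ℕ => log (1 - q ^ (j + 1)) := by
  have h : Summable fun j : ℕ => -q ^ (j + 1) :=
    ((summable_geometric_of_lt_one hq₀ hq₁).mul_left q).neg.congr fun j => by ring
  simpa [sub_eq_add_neg] using summable_log_one_add_of_summable h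

lemma tailProd_eq_exp (hq₀ : 0 ≤ q) (hq₁ : q < 1) (i : ℕ) :
    tailProd q i = exp (∑' j : ℕ, log (1 - q ^ (j + i + 1))) :=
  (rexp_tsum_eq_tprod (fun j => one_sub_pow_succ_pos hq₀ hq₁ (j + i))
    ((summable_nat_add_iff i).2 (summable_log_one_sub_pow hq₀ hq₁))).symm

lemma tailProd_pos (hq₀ : 0 ≤ q) (hq₁ : q < 1) (i : ℕ) : 0 < tailProd q i := by
  rw [tailProd_eq_exp hq₀ hq₁]
  exact exp_pos _

lemma tailProd_le_one (hq₀ : 0 ≤ q) (hq₁ : q < 1) (i : ℕ) : tailProd q i ≤ 1 := by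
  rw [tailProd_eq_exp hq₀ hq₁, exp_le_one_iff]
  exact tsum_nonpos fun j =>
    log_nonpos (sub_nonneg.2 (pow_le_one₀ hq₀ hq₁.le)) (sub_le_self _ (pow_nonneg hq₀ _))

lemma tailProd_eq_mul_succ (hq₀ : 0 ≤ q) (hq₁ : q < 1) (i : ℕ) :
    tailProd q i = (1 - q ^ (i + 1)) * tailProd q (i + 1) := by
  rw [tailProd_eq_exp hq₀ hq₁, tailProd_eq_exp hq₀ hq₁,
    ((summable_nat_add_iff i).2 (summable_log_one_sub_pow hq₀ hq₁)).tsum_eq_zero_add, exp_add,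
    zero_add, exp_log (one_sub_pow_succ_pos hq₀ hq₁ i)]
  ring_nf

lemma tendsto_tailProd (hq₀ : 0 ≤ q) (hq₁ : q < 1) : Tendsto (tailProd q) atTop (𝓝 1) := by
  have h := (continuous_exp.tendsto 0).comp
    (tendsto_sum_nat_add fun j => log (1 - q ^ (j + 1)))
  rw [exp_zero] at h
  exact h.congr fun i => (tailProd_eq_exp hq₀ hq₁ i).symm

lemma qWeight_nonneg (hq₀ : 0 ≤ q) (hq₁ : q < 1) (k : ℕ) : 0 ≤ qWeight q k :=
  mul_nonneg (pow_nonneg hq₀ k) (tailProd_pos hq₀ hq₁ k).le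

lemma qWeight_le_pow (hq₀ : 0 ≤ q) (hq₁ : q < 1) (k : ℕ) : qWeight q k ≤ q ^ k :=
  mul_le_of_le_one_right (pow_nonneg hq₀ k) (tailProd_le_one hq₀ hq₁ k)

lemma one_sub_pow_mul_qWeight_succ (hq₀ : 0 ≤ q) (hq₁ : q < 1) (k : ℕ) :
    (1 - q ^ (k + 1)) * qWeight q (k + 1) = q * qWeight q k := by
  rw [qWeight, qWeight, tailProd_eq_mul_succ hq₀ hq₁ k]
  ring

lemma tiltedTerm_le (hq₀ : 0 ≤ q) (hq₁ : q < 1) (m k : ℕ) {x : ℝ} (hx₀ : 0 ≤ x) (hx₁ : x ≤ 1) :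
    (k : ℝ) ^ m * x ^ k * qWeight q k ≤ (k : ℝ) ^ m * q ^ k :=
  mul_le_mul (mul_le_of_le_one_right (by positivity) (pow_le_one₀ hx₀ hx₁))
    (qWeight_le_pow hq₀ hq₁ k) (qWeight_nonneg hq₀ hq₁ k) (by positivity)

lemma summable_pow_mul_pow (hq₀ : 0 ≤ q) (hq₁ : q < 1) (m : ℕ) :
    Summable fun k : ℕ => (k : ℝ) ^ m * q ^ k :=
  summable_pow_mul_geometric_of_norm_lt_one m (by rwa [norm_of_nonneg hq₀])

lemma hasSum_tiltedMoment (hq₀ : 0 ≤ q) (hq₁ : q < 1) (m : ℕ) {x : ℝ} (hx₀ : 0 ≤ x)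
    (hx₁ : x ≤ 1) :
    HasSum (fun k : ℕ => (k : ℝ) ^ m * x ^ k * qWeight q k) (tiltedMoment q m x) :=
  (Summable.of_nonneg_of_le (fun k => mul_nonneg (by positivity) (qWeight_nonneg hq₀ hq₁ k))
    (fun k => tiltedTerm_le hq₀ hq₁ m k hx₀ hx₁) (summable_pow_mul_pow hq₀ hq₁ m)).hasSum

lemma tiltedMoment_nonneg (hq₀ : 0 ≤ q) (hq₁ : q < 1) (m : ℕ) {x : ℝ} (hx₀ : 0 ≤ x) :
    0 ≤ tiltedMoment q m x :=
  tsum_nonneg fun k => mul_nonneg (by positivity) (qWeight_nonneg hq₀ hq₁ k)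

lemma tiltedMoment_at_zero (m : ℕ) : tiltedMoment q m 0 = 0 ^ m * tailProd q 0 := by
  rw [tiltedMoment, tsum_eq_single 0 fun k hk => by simp [hk]]
  simp [qWeight]

lemma tiltedMoment_zero_pos (hq₀ : 0 ≤ q) (hq₁ : q < 1) {x : ℝ} (hx₀ : 0 ≤ x) (hx₁ : x ≤ 1) :
    0 < tiltedMoment q 0 x :=
  calc 0 < qWeight q 0 := by simpa [qWeight] using tailProd_pos hq₀ hq₁ 0
    _ ≤ tiltedMoment q 0 x := by
      simpa [tiltedMoment] using (hasSum_tiltedMoment hq₀ hq₁ 0 hx₀ hx₁).summable.le_tsum 0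
        fun k _ => mul_nonneg (by positivity) (qWeight_nonneg hq₀ hq₁ k)

lemma sub_eq_mul_of_hasSum_shift (hq₀ : 0 ≤ q) (hq₁ : q < 1) {g : ℕ → ℝ} {x A B C : ℝ}
    (hA : HasSum (fun k => g k * x ^ k * qWeight q k) A)
    (hB : HasSum (fun k => g k * (q * x) ^ k * qWeight q k) B)
    (hC : HasSum (fun k => g (k + 1) * x ^ k * qWeight q k) C) :
    A - B = q * x * C := by
  rw [← hA.tsum_eq, ← hB.tsum_eq, ← hC.tsum_eq, hA.summable.tsum_eq_zero_add,
    hB.summable.tsum_eq_zero_add, ← tsum_mul_left, pow_zero, pow_zero, add_sub_add_left_eq_sub,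
    ← ((summable_nat_add_iff 1).2 hA.summable).tsum_sub ((summable_nat_add_iff 1).2 hB.summable)]
  refine tsum_congr fun k => ?_
  linear_combination (g (k + 1) * x ^ (k + 1)) * one_sub_pow_mul_qWeight_succ hq₀ hq₁ k

lemma tiltedMoment_zero_mul (hq₀ : 0 ≤ q) (hq₁ : q < 1) {x : ℝ} (hx₀ : 0 ≤ x) (hx₁ : x ≤ 1) :
    tiltedMoment q 0 (q * x) = (1 - q * x) * tiltedMoment q 0 x := by
  have hqx₀ : 0 ≤ q * x := mul_nonneg hq₀ hx₀
  have hqx₁ : q * x ≤ 1 := mul_le_one₀ hq₁.le hx₀ hx₁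
  have := sub_eq_mul_of_hasSum_shift hq₀ hq₁ (g := fun k => (k : ℝ) ^ 0)
    (hasSum_tiltedMoment hq₀ hq₁ 0 hx₀ hx₁) (hasSum_tiltedMoment hq₀ hq₁ 0 hqx₀ hqx₁)
    (by simpa using hasSum_tiltedMoment hq₀ hq₁ 0 hx₀ hx₁)
  linarith

lemma tiltedMoment_one_mul (hq₀ : 0 ≤ q) (hq₁ : q < 1) {x : ℝ} (hx₀ : 0 ≤ x) (hx₁ : x ≤ 1) :
    tiltedMoment q 1 (q * x) = (1 - q * x) * tiltedMoment q 1 x - q * x * tiltedMoment q 0 x := by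
  have hqx₀ : 0 ≤ q * x := mul_nonneg hq₀ hx₀
  have hqx₁ : q * x ≤ 1 := mul_le_one₀ hq₁.le hx₀ hx₁
  have hC := (hasSum_tiltedMoment hq₀ hq₁ 1 hx₀ hx₁).add (hasSum_tiltedMoment hq₀ hq₁ 0 hx₀ hx₁)
  have := sub_eq_mul_of_hasSum_shift hq₀ hq₁ (g := fun k => (k : ℝ) ^ 1)
    (hasSum_tiltedMoment hq₀ hq₁ 1 hx₀ hx₁) (hasSum_tiltedMoment hq₀ hq₁ 1 hqx₀ hqx₁)
    (hC.congr_fun fun k => by push_cast; ring)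
  linarith

lemma tiltedMoment_two_mul (hq₀ : 0 ≤ q) (hq₁ : q < 1) {x : ℝ} (hx₀ : 0 ≤ x) (hx₁ : x ≤ 1) :
    tiltedMoment q 2 (q * x) = (1 - q * x) * tiltedMoment q 2 x
      - q * x * (2 * tiltedMoment q 1 x + tiltedMoment q 0 x) := by
  have hqx₀ : 0 ≤ q * x := mul_nonneg hq₀ hx₀
  have hqx₁ : q * x ≤ 1 := mul_le_one₀ hq₁.le hx₀ hx₁
  have hC := (hasSum_tiltedMoment hq₀ hq₁ 2 hx₀ hx₁).add
    (((hasSum_tiltedMoment hq₀ hq₁ 1 hx₀ hx₁).mul_left 2).add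
      (hasSum_tiltedMoment hq₀ hq₁ 0 hx₀ hx₁))
  have := sub_eq_mul_of_hasSum_shift hq₀ hq₁ (g := fun k => (k : ℝ) ^ 2)
    (hasSum_tiltedMoment hq₀ hq₁ 2 hx₀ hx₁) (hasSum_tiltedMoment hq₀ hq₁ 2 hqx₀ hqx₁)
    (hC.congr_fun fun k => by push_cast; ring)
  linarith

lemma tendsto_tiltedMoment_pow (hq₀ : 0 ≤ q) (hq₁ : q < 1) (m : ℕ) :
    Tendsto (fun t : ℕ => tiltedMoment q m (q ^ t)) atTop (𝓝 (tiltedMoment q m 0)) := by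
  refine tendsto_tsum_of_dominated_convergence (summable_pow_mul_pow hq₀ hq₁ m)
    (fun k => (((tendsto_pow_atTop_nhds_zero_of_lt_one hq₀ hq₁).pow k).const_mul _).mul_const _)
    (Eventually.of_forall fun t k => ?_)
  have hx₀ : 0 ≤ q ^ t := pow_nonneg hq₀ t
  rw [norm_of_nonneg (mul_nonneg (by positivity) (qWeight_nonneg hq₀ hq₁ k))]
  exact tiltedTerm_le hq₀ hq₁ m k hx₀ (pow_le_one₀ hq₀ hq₁.le)

lemma tendsto_tiltedMoment_div (hq₀ : 0 ≤ q) (hq₁ : q < 1) {m : ℕ} (hm : m ≠ 0) :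
    Tendsto (fun t : ℕ => tiltedMoment q m (q ^ t) / tiltedMoment q 0 (q ^ t)) atTop (𝓝 0) := by
  have h := (tendsto_tiltedMoment_pow hq₀ hq₁ m).div (tendsto_tiltedMoment_pow hq₀ hq₁ 0)
    (tiltedMoment_zero_pos hq₀ hq₁ le_rfl zero_le_one).ne'
  rwa [tiltedMoment_at_zero m, zero_pow hm, zero_mul, zero_div] at h

lemma tiltedMoment_zero_one (hq₀ : 0 ≤ q) (hq₁ : q < 1) : tiltedMoment q 0 1 = 1 := by
  have hconst (t : ℕ) :
      tiltedMoment q 0 (q ^ t) * tailProd q t = tiltedMoment q 0 1 * tailProd q 0 := by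
    induction t with
    | zero => simp
    | succ t ih =>
      rw [← ih, tailProd_eq_mul_succ hq₀ hq₁ t, pow_succ',
        tiltedMoment_zero_mul hq₀ hq₁ (pow_nonneg hq₀ t) (pow_le_one₀ hq₀ hq₁.le)]
      ring
  have h := ((tendsto_tiltedMoment_pow hq₀ hq₁ 0).mul (tendsto_tailProd hq₀ hq₁)).congr hconst
  have := tendsto_nhds_unique h tendsto_const_nhds
  rw [tiltedMoment_at_zero, pow_zero, one_mul, mul_one] at this
  exact (mul_eq_right₀ (tailProd_pos hq₀ hq₁ 0).ne').1 this.symm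

noncomputable def tiltedMean (q : ℝ) (t : ℕ) : ℝ :=
  tiltedMoment q 1 (q ^ t) / tiltedMoment q 0 (q ^ t)

noncomputable def tiltedSecondMoment (q : ℝ) (t : ℕ) : ℝ :=
  tiltedMoment q 2 (q ^ t) / tiltedMoment q 0 (q ^ t)

lemma lambertTerm_nonneg (hq₀ : 0 ≤ q) (hq₁ : q < 1) (t : ℕ) : 0 ≤ lambertTerm q t :=
  div_nonneg (pow_nonneg hq₀ _) (sub_nonneg.2 (pow_le_one₀ hq₀ hq₁.le))

lemma tiltedMean_nonneg (hq₀ : 0 ≤ q) (hq₁ : q < 1) (t : ℕ) : 0 ≤ tiltedMean q t :=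
  div_nonneg (tiltedMoment_nonneg hq₀ hq₁ 1 (pow_nonneg hq₀ t))
    (tiltedMoment_nonneg hq₀ hq₁ 0 (pow_nonneg hq₀ t))

lemma tiltedMean_sub_succ (hq₀ : 0 ≤ q) (hq₁ : q < 1) (t : ℕ) :
    tiltedMean q t - tiltedMean q (t + 1) = lambertTerm q t := by
  have hx₀ : 0 ≤ q ^ t := pow_nonneg hq₀ t
  have hx₁ : q ^ t ≤ 1 := pow_le_one₀ hq₀ hq₁.le
  have h₀ := (tiltedMoment_zero_pos hq₀ hq₁ hx₀ hx₁).ne'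
  rw [tiltedMean, tiltedMean, lambertTerm, pow_succ',
    div_sub_div_eq_of_recurrence h₀ (pow_succ' q t ▸ (one_sub_pow_succ_pos hq₀ hq₁ t).ne')
      (tiltedMoment_zero_mul hq₀ hq₁ hx₀ hx₁) (tiltedMoment_one_mul hq₀ hq₁ hx₀ hx₁),
    div_self h₀, mul_one]

lemma tiltedSecondMoment_sub_succ (hq₀ : 0 ≤ q) (hq₁ : q < 1) (t : ℕ) :
    tiltedSecondMoment q t - tiltedSecondMoment q (t + 1)
      = lambertTerm q t * (2 * tiltedMean q t + 1) := by
  have hx₀ : 0 ≤ q ^ t := pow_nonneg hq₀ t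
  have hx₁ : q ^ t ≤ 1 := pow_le_one₀ hq₀ hq₁.le
  have h₀ := (tiltedMoment_zero_pos hq₀ hq₁ hx₀ hx₁).ne'
  rw [tiltedSecondMoment, tiltedSecondMoment, tiltedMean, lambertTerm, pow_succ',
    div_sub_div_eq_of_recurrence h₀ (pow_succ' q t ▸ (one_sub_pow_succ_pos hq₀ hq₁ t).ne')
      (tiltedMoment_zero_mul hq₀ hq₁ hx₀ hx₁) (tiltedMoment_two_mul hq₀ hq₁ hx₀ hx₁),
    add_div, mul_div_assoc (2 : ℝ), div_self h₀]

theorem hasSum_sq_mul_qWeight (hq₀ : 0 ≤ q) (hq₁ : q < 1) :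
    HasSum (fun i : ℕ => (i : ℝ) ^ 2 * qWeight q i)
      ((∑' t, lambertTerm q t) ^ 2 + ∑' t, lambertTerm q t + ∑' t, lambertTerm q t ^ 2) := by
  have hμ : Antitone (tiltedMean q) := antitone_nat_of_succ_le fun t => by
    linarith [tiltedMean_sub_succ hq₀ hq₁ t, lambertTerm_nonneg hq₀ hq₁ t]
  have hμ_lim : Tendsto (tiltedMean q) atTop (𝓝 0) := tendsto_tiltedMoment_div hq₀ hq₁ one_ne_zero
  have hS₀ : HasSum (lambertTerm q) (tiltedMean q 0) := by
    simpa only [tiltedMean_sub_succ hq₀ hq₁, sub_zero] using hμ.hasSum_sub_succ hμ_lim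
  have hsq : HasSum (fun t => tiltedMean q t ^ 2 - tiltedMean q (t + 1) ^ 2)
      (tiltedMean q 0 ^ 2) := by
    have hanti : Antitone fun t => tiltedMean q t ^ 2 := fun s t hst =>
      pow_le_pow_left₀ (tiltedMean_nonneg hq₀ hq₁ t) (hμ hst) 2
    simpa using hanti.hasSum_sub_succ (hμ_lim.pow 2)
  have hν : HasSum (fun t => lambertTerm q t * (2 * tiltedMean q t + 1))
      (tiltedSecondMoment q 0) := by
    have hanti : Antitone (tiltedSecondMoment q) := antitone_nat_of_succ_le fun t => by
      have := mul_nonneg (lambertTerm_nonneg hq₀ hq₁ t)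
        (by linarith [tiltedMean_nonneg hq₀ hq₁ t] : 0 ≤ 2 * tiltedMean q t + 1)
      linarith [tiltedSecondMoment_sub_succ hq₀ hq₁ t]
    simpa [tiltedSecondMoment_sub_succ hq₀ hq₁] using
      hanti.hasSum_sub_succ (tendsto_tiltedMoment_div hq₀ hq₁ two_ne_zero)
  have hS₁ : HasSum (fun t => lambertTerm q t ^ 2)
      (tiltedSecondMoment q 0 - tiltedMean q 0 ^ 2 - tiltedMean q 0) :=
    ((hν.sub hsq).sub hS₀).congr_fun fun t => by
      rw [← tiltedMean_sub_succ hq₀ hq₁ t]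
      ring
  have hM : HasSum (fun i : ℕ => (i : ℝ) ^ 2 * qWeight q i) (tiltedSecondMoment q 0) := by
    simpa [tiltedSecondMoment, tiltedMoment_zero_one hq₀ hq₁] using
      hasSum_tiltedMoment hq₀ hq₁ 2 zero_le_one le_rfl
  rw [hS₀.tsum_eq, hS₁.tsum_eq]
  convert hM using 1
  ring

lemma a_eq_qWeight (i : ℕ) : a i = qWeight 2⁻¹ i := by
  have h (n : ℕ) : (2 : ℝ) ^ (-(n : ℤ)) = 2⁻¹ ^ n := by rw [zpow_neg, zpow_natCast, inv_pow]
  rw [a, qWeight, tailProd, h]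
  congr 1
  refine tprod_congr fun j => ?_
  rw [← h]
  push_cast
  ring_nf

lemma lambertTerm_inv_two (t : ℕ) : lambertTerm 2⁻¹ t = 1 / ((2 : ℝ) ^ (t + 1) - 1) := by
  have : (1 : ℝ) < 2 ^ (t + 1) := one_lt_pow₀ one_lt_two (by omega)
  rw [lambertTerm, inv_pow]
  field_simp

theorem tsum_sq_mul_a : ∑' i : ℕ, (i : ℝ) ^ 2 * a i = c₀ ^ 2 + c₀ + c₁ := by
  have hq₀ : (0 : ℝ) ≤ 2⁻¹ := by norm_num
  have hq₁ : (2⁻¹ : ℝ) < 1 := by norm_num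
  have hc₀ : c₀ = ∑' t, lambertTerm 2⁻¹ t := tsum_congr fun t => (lambertTerm_inv_two t).symm
  have hc₁ : c₁ = ∑' t, lambertTerm 2⁻¹ t ^ 2 :=
    tsum_congr fun t => by rw [lambertTerm_inv_two, div_pow, one_pow]
  simp_rw [a_eq_qWeight]
  rw [(hasSum_sq_mul_qWeight hq₀ hq₁).tsum_eq, hc₀, hc₁]
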